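/- arXiv:2306.01539 — 6 statements merged into one kernel-verified Lean document; each statement's English description precedes it below -/
import Mathlib

section
/- Let d ≥ 3 and let D, E, F' be homogeneous binary forms of degree d−2 in ℂ[t₀,t₁] with no common zero on ℂ² ∖ {(0,0)}. Set G = D(t₀,t₁)y₁² + 2E(t₀,t₁)y₁y₂ + F'(t₀,t₁)y₂² ∈ ℂ[t₀,t₁,y₁,y₂] and R = E² − D·F' ∈ ℂ[t₀,t₁]. Let (a,b) ∈ ℂ² ∖ {(0,0)} and (c,e) ∈ ℂ² ∖ {(0,0)} satisfy G(a,b,c,e) = 0. Then all four partial derivatives ∂G/∂t₀, ∂G/∂t₁, ∂G/∂y₁, ∂G/∂y₂ vanish at (a,b,c,e) if and only if (b·t₀ − a·t₁)² divides R in ℂ[t₀,t₁]. -/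
/-!
Fix `v = [a, b]` and write `α, β, γ` for the values of `D, E, F'` at `v`. The `y`-partials of
`G` vanish at `(c, e) ≠ 0` exactly when `(c, e)` lies in the kernel of `[[α, β], [β, γ]]`;
as `G(v, c, e) = 0` and `(α, β, γ) ≠ 0`, this happens iff `R(v) = β² - αγ = 0`. The adjugate
`[[γ, -β], [-β, α]]` then equals `l • (c, e)(c, e)ᵀ` with `l ≠ 0`, so differentiating the
determinant gives `∂ⱼR(v) = -l · ∂G/∂tⱼ(v, c, e)`. Thus the point is singular iff `R` and its
gradient vanish at `v`, which for a binary form means that `(b t₀ - a t₁)²` divides `R`.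
-/

open MvPolynomial

theorem Derivation.map_ofNat {R A M : Type*} [CommSemiring R] [CommSemiring A] [Algebra R A]
    [AddCommMonoid M] [Module A M] [Module R M] (D : Derivation R A M) (n : ℕ) [n.AtLeastTwo] :
    D (no_index (OfNat.ofNat n : A)) = 0 :=
  D.map_natCast n

namespace MvPolynomial

theorem pderiv_rename_eq_zero_of_notMem_range {R σ τ : Type*} [CommSemiring R] {f : σ → τ}
    {j : τ} (hj : j ∉ Set.range f) (p : MvPolynomial σ R) : pderiv j (rename f p) = 0 :=
  pderiv_eq_zero_of_notMem_vars fun h => hj <| by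
    obtain ⟨i, -, rfl⟩ := mem_vars_rename f p h
    exact ⟨i, rfl⟩

theorem IsHomogeneous.aeval_mul_left {R S σ : Type*} [CommSemiring R] [CommSemiring S]
    [Algebra R S] {φ : MvPolynomial σ R} {n : ℕ} (hφ : φ.IsHomogeneous n) (t : S)
    (x : σ → S) :
    MvPolynomial.aeval (fun i => t * x i) φ = t ^ n * MvPolynomial.aeval x φ := by
  rw [aeval_def, aeval_def, eval₂_eq, eval₂_eq, Finset.mul_sum]
  refine Finset.sum_congr rfl fun m hm => ?_
  simp_rw [mul_pow, Finset.prod_mul_distrib, Finset.prod_pow_eq_pow_sum]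
  rw [← hφ.degree_eq_sum_deg_support hm, mul_left_comm]

theorem dvd_aeval_sub_aeval {R S σ : Type*} [CommSemiring R] [CommRing S] [Algebra R S]
    (φ : MvPolynomial σ R) {x y : σ → S} {u : S} (h : ∀ i, u ∣ x i - y i) :
    u ∣ aeval x φ - aeval y φ := by
  induction φ using MvPolynomial.induction_on with
  | C r => simp
  | add p q hp hq => simpa [add_sub_add_comm] using dvd_add hp hq
  | mul_X p i hp =>
    have : aeval x (p * X i) - aeval y (p * X i)
        = (aeval x p - aeval y p) * x i + aeval y p * (x i - y i) := by
      simp only [map_mul, aeval_X]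
      ring
    rw [this]
    exact dvd_add (dvd_mul_of_dvd_left hp _) (dvd_mul_of_dvd_right (h i) _)

attribute [local instance] gradedAlgebra in
theorem IsHomogeneous.exists_eq_mul_of_dvd {R σ : Type*} [CommSemiring R]
    {φ ψ : MvPolynomial σ R} {m n : ℕ}
    (hφ : φ.IsHomogeneous m) (hψ : ψ.IsHomogeneous n) (h : ψ ∣ φ) :
    ∃ χ : MvPolynomial σ R, χ.IsHomogeneous (m - n) ∧ φ = ψ * χ := by
  obtain ⟨χ, rfl⟩ := h
  have hcomp := DirectSum.coe_decompose_mul_of_left_mem (homogeneousSubmodule σ R) m (b := χ) hψ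
  rw [DirectSum.decompose_of_mem_same _ hφ] at hcomp
  split_ifs at hcomp
  · exact ⟨_, (mem_homogeneousSubmodule _ _).mp (SetLike.coe_mem _), hcomp⟩
  · exact ⟨0, isHomogeneous_zero _ _ _, by rw [hcomp, mul_zero]⟩

section BinaryForm

variable {K : Type*} [Field K] {v : Fin 2 → K}

noncomputable def vanishingLinearForm (v : Fin 2 → K) : MvPolynomial (Fin 2) K :=
  C (v 1) * X 0 - C (v 0) * X 1

theorem eval_vanishingLinearForm (v : Fin 2 → K) : eval v (vanishingLinearForm v) = 0 := by
  simp [vanishingLinearForm, mul_comm]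

theorem isHomogeneous_vanishingLinearForm (v : Fin 2 → K) :
    (vanishingLinearForm v).IsHomogeneous 1 :=
  (isHomogeneous_C_mul_X _ _).sub (isHomogeneous_C_mul_X _ _)

theorem exists_eval_pderiv_vanishingLinearForm_ne_zero (hv : v ≠ 0) (w : Fin 2 → K) :
    ∃ j, eval w (pderiv j (vanishingLinearForm v)) ≠ 0 := by
  by_contra! h
  apply hv
  ext i
  fin_cases i
  · simpa [vanishingLinearForm, pderiv_X] using h 1
  · simpa [vanishingLinearForm, pderiv_X] using h 0

theorem vanishingLinearForm_dvd_of_eval_eq_zero {R : MvPolynomial (Fin 2) K} {n : ℕ}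
    (hR : R.IsHomogeneous n) (hv : v ≠ 0) (h : eval v R = 0) : vanishingLinearForm v ∣ R := by
  obtain ⟨i, hi⟩ := Function.ne_iff.mp hv
  -- The substitutions `t ↦ vᵢ • t` and `t ↦ tᵢ • v` agree modulo the linear form and send `R`
  -- to `vᵢ ^ n • R` and to `tᵢ ^ n • R(v) = 0`.
  have hdvd := dvd_aeval_sub_aeval R (u := vanishingLinearForm v)
    (x := fun j => C (v i) * X j) (y := fun j => X i * (C ∘ v) j) fun j => by
      fin_cases i <;> fin_cases j <;> simp [vanishingLinearForm, mul_comm, dvd_sub_comm]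
  rw [hR.aeval_mul_left, hR.aeval_mul_left, aeval_X_left_apply,
    aeval_C_comp_left, aeval_eq_eval, h, C_0, mul_zero, sub_zero] at hdvd
  exact ((isUnit_iff_ne_zero.mpr hi).map C).pow n |>.dvd_mul_left.mp hdvd

theorem vanishingLinearForm_sq_dvd_iff {R : MvPolynomial (Fin 2) K} {n : ℕ}
    (hR : R.IsHomogeneous n) (hv : v ≠ 0) :
    vanishingLinearForm v ^ 2 ∣ R ↔ eval v R = 0 ∧ ∀ j, eval v (pderiv j R) = 0 := by
  constructor
  · rintro ⟨T, rfl⟩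
    simp [eval_vanishingLinearForm]
  rintro ⟨hR0, hR1⟩
  obtain ⟨Q, hQ, rfl⟩ := hR.exists_eq_mul_of_dvd (isHomogeneous_vanishingLinearForm v)
    (vanishingLinearForm_dvd_of_eval_eq_zero hR hv hR0)
  obtain ⟨j, hj⟩ := exists_eval_pderiv_vanishingLinearForm_ne_zero hv v
  have hQ0 : eval v Q = 0 := by
    simpa [pderiv_mul, eval_vanishingLinearForm, hj] using hR1 j
  rw [pow_two]
  exact mul_dvd_mul_left _ (vanishingLinearForm_dvd_of_eval_eq_zero hQ hv hQ0)

end BinaryForm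

end MvPolynomial

section Conic

variable {K : Type*} [Field K] {α β γ c e : K}

theorem exists_conic_coeffs_eq_of_mem_kernel (h₁ : α * c + β * e = 0)
    (h₂ : β * c + γ * e = 0) (hw : c ≠ 0 ∨ e ≠ 0) :
    ∃ l, α = l * e ^ 2 ∧ β = -(l * c * e) ∧ γ = l * c ^ 2 := by
  rcases hw with hc | he
  · refine ⟨γ / c ^ 2, ?_, ?_, ?_⟩ <;> field_simp
    · linear_combination c * h₁ - e * h₂
    · linear_combination h₂
  · refine ⟨α / e ^ 2, ?_, ?_, ?_⟩ <;> field_simp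
    · linear_combination h₁
    · linear_combination e * h₂ - c * h₁

theorem conic_gradient_eq_zero_of_disc_eq_zero (hq : α * c ^ 2 + 2 * β * c * e + γ * e ^ 2 = 0)
    (hdisc : β ^ 2 - α * γ = 0) (hM : ¬(α = 0 ∧ β = 0 ∧ γ = 0)) :
    α * c + β * e = 0 ∧ β * c + γ * e = 0 := by
  by_cases hα : α = 0
  · have hβ : β = 0 := pow_eq_zero_iff two_ne_zero |>.mp (by linear_combination hdisc + γ * hα)
    have hγ : γ ≠ 0 := fun hγ => hM ⟨hα, hβ, hγ⟩
    have he : e = 0 := by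
      have : γ * e ^ 2 = 0 := by linear_combination hq - c ^ 2 * hα - 2 * c * e * hβ
      simpa [hγ] using this
    simp [hα, hβ, he]
  · have h₁ : α * c + β * e = 0 :=
      pow_eq_zero_iff two_ne_zero |>.mp (by linear_combination α * hq + e ^ 2 * hdisc)
    have h₂ : α * (β * c + γ * e) = 0 := by linear_combination β * h₁ - e * hdisc
    exact ⟨h₁, (mul_eq_zero.mp h₂).resolve_left hα⟩

theorem conic_singular_iff {ι : Type*} (dD dE dF : ι → K)
    (hq : α * c ^ 2 + 2 * β * c * e + γ * e ^ 2 = 0) (hw : c ≠ 0 ∨ e ≠ 0)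
    (hM : ¬(α = 0 ∧ β = 0 ∧ γ = 0)) :
    ((α * c + β * e = 0 ∧ β * c + γ * e = 0) ∧
        ∀ j, dD j * c ^ 2 + 2 * dE j * c * e + dF j * e ^ 2 = 0) ↔
      β ^ 2 - α * γ = 0 ∧ ∀ j, 2 * β * dE j - dD j * γ - α * dF j = 0 := by
  constructor
  · rintro ⟨⟨h₁, h₂⟩, hS⟩
    obtain ⟨l, rfl, rfl, rfl⟩ := exists_conic_coeffs_eq_of_mem_kernel h₁ h₂ hw
    exact ⟨by ring, fun j => by linear_combination (-l) * hS j⟩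
  · rintro ⟨hdisc, hR⟩
    obtain ⟨h₁, h₂⟩ := conic_gradient_eq_zero_of_disc_eq_zero hq hdisc hM
    obtain ⟨l, rfl, rfl, rfl⟩ := exists_conic_coeffs_eq_of_mem_kernel h₁ h₂ hw
    have hl : l ≠ 0 := by rintro rfl; simp at hM
    refine ⟨⟨h₁, h₂⟩, fun j => ?_⟩
    have : -l * (dD j * c ^ 2 + 2 * dE j * c * e + dF j * e ^ 2) = 0 := by
      linear_combination hR j
    simpa [hl] using this

end Conic

section ConicBundle

variable {K : Type*} [Field K] (D E F : MvPolynomial (Fin 2) K) (a b c e : K)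

noncomputable def conicBundleForm : MvPolynomial (Fin 4) K :=
  rename (Fin.castLE (by norm_num)) D * X 2 ^ 2
    + 2 * rename (Fin.castLE (by norm_num)) E * X 2 * X 3
    + rename (Fin.castLE (by norm_num)) F * X 3 ^ 2

theorem eval_rename_castLE (p : MvPolynomial (Fin 2) K) :
    eval ![a, b, c, e] (rename (Fin.castLE (by norm_num) : Fin 2 → Fin 4) p) =
      eval ![a, b] p := by
  have : (![a, b, c, e] ∘ Fin.castLE (by norm_num) : Fin 2 → K) = ![a, b] := by
    ext i
    fin_cases i <;> rfl
  rw [eval_rename, this]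

theorem eval_conicBundleForm :
    eval ![a, b, c, e] (conicBundleForm D E F) =
      eval ![a, b] D * c ^ 2 + 2 * eval ![a, b] E * c * e + eval ![a, b] F * e ^ 2 := by
  simp [conicBundleForm, eval_rename_castLE]

theorem eval_pderiv_castLE_conicBundleForm (j : Fin 2) :
    eval ![a, b, c, e] (pderiv (Fin.castLE (by norm_num) j) (conicBundleForm D E F)) =
      eval ![a, b] (pderiv j D) * c ^ 2 + 2 * eval ![a, b] (pderiv j E) * c * e
        + eval ![a, b] (pderiv j F) * e ^ 2 := by
  have hX (k : Fin 4) (hk : 2 ≤ k) :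
      pderiv (Fin.castLE (by norm_num) j) (X k : MvPolynomial (Fin 4) K) = 0 :=
    pderiv_X_of_ne (by rintro rfl; exact (j.isLt.trans_le (Fin.le_def.mp hk)).false)
  simp [conicBundleForm, pderiv_rename (Fin.castLE_injective _), eval_rename_castLE, hX,
    Derivation.map_ofNat, mul_comm, mul_left_comm]

theorem eval_pderiv_two_conicBundleForm :
    eval ![a, b, c, e] (pderiv 2 (conicBundleForm D E F)) =
      2 * (eval ![a, b] D * c + eval ![a, b] E * e) := by
  simp [conicBundleForm, pderiv_rename_eq_zero_of_notMem_range, eval_rename_castLE,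
    Derivation.map_ofNat, mul_add, mul_comm, mul_left_comm, mul_assoc]

theorem eval_pderiv_three_conicBundleForm :
    eval ![a, b, c, e] (pderiv 3 (conicBundleForm D E F)) =
      2 * (eval ![a, b] E * c + eval ![a, b] F * e) := by
  simp [conicBundleForm, pderiv_rename_eq_zero_of_notMem_range, eval_rename_castLE,
    Derivation.map_ofNat, mul_add, mul_comm, mul_left_comm, mul_assoc]

theorem forall_eval_pderiv_conicBundleForm_eq_zero_iff [NeZero (2 : K)] :
    (∀ i, eval ![a, b, c, e] (pderiv i (conicBundleForm D E F)) = 0) ↔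
      (eval ![a, b] D * c + eval ![a, b] E * e = 0 ∧
          eval ![a, b] E * c + eval ![a, b] F * e = 0) ∧
        ∀ j, eval ![a, b] (pderiv j D) * c ^ 2 + 2 * eval ![a, b] (pderiv j E) * c * e
          + eval ![a, b] (pderiv j F) * e ^ 2 = 0 := by
  constructor
  · intro h
    refine ⟨⟨?_, ?_⟩, fun j => ?_⟩
    · simpa [eval_pderiv_two_conicBundleForm, two_ne_zero] using h 2
    · simpa [eval_pderiv_three_conicBundleForm, two_ne_zero] using h 3
    · simpa [eval_pderiv_castLE_conicBundleForm] using h (Fin.castLE (by norm_num) j)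
  · rintro ⟨⟨h₂, h₃⟩, h⟩ i
    fin_cases i
    · exact (eval_pderiv_castLE_conicBundleForm D E F a b c e 0).trans (h 0)
    · exact (eval_pderiv_castLE_conicBundleForm D E F a b c e 1).trans (h 1)
    · exact (eval_pderiv_two_conicBundleForm D E F a b c e).trans (by rw [h₂, mul_zero])
    · exact (eval_pderiv_three_conicBundleForm D E F a b c e).trans (by rw [h₃, mul_zero])

end ConicBundle

/-- Singular points of the curve `Σ : D y₁² + 2E y₁y₂ + F' y₂² = 0` on
`Γ × Γ^⊥ ≅ ℙ¹ × ℙ¹` correspond exactly to multiple roots of the small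
discriminant `R = E² − D·F'`. -/
theorem sigma_singular_iff_multiple_root_of_small_discriminant
    (d : ℕ)
    (D E F' : MvPolynomial (Fin 2) ℂ)
    (hD : D.IsHomogeneous (d - 2)) (hE : E.IsHomogeneous (d - 2))
    (hF : F'.IsHomogeneous (d - 2))
    (hcz : ∀ x : Fin 2 → ℂ, x ≠ 0 →
      ¬(eval x D = 0 ∧ eval x E = 0 ∧ eval x F' = 0))
    (a b c e : ℂ) (hab : (a, b) ≠ (0, 0)) (hce : (c, e) ≠ (0, 0))
    (G : MvPolynomial (Fin 4) ℂ)
    (hG : G = rename (Fin.castLE (by norm_num)) D * X 2 ^ 2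
        + 2 * rename (Fin.castLE (by norm_num)) E * X 2 * X 3
        + rename (Fin.castLE (by norm_num)) F' * X 3 ^ 2)
    (hzero : eval ![a, b, c, e] G = 0) :
    (∀ i : Fin 4, eval ![a, b, c, e] (pderiv i G) = 0) ↔
      (MvPolynomial.C b * X 0 - MvPolynomial.C a * X 1) ^ 2 ∣ (E ^ 2 - D * F') := by
  have hv : ![a, b] ≠ 0 := by simpa [Matrix.cons_eq_zero_iff] using hab
  have hw : c ≠ 0 ∨ e ≠ 0 := by simpa [or_iff_not_imp_left] using hce
  have hR := (hE.pow 2).sub ((mul_two (d - 2)).symm ▸ hD.mul hF)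
  have hRj : ∀ j : Fin 2, eval ![a, b] (pderiv j (E ^ 2 - D * F')) =
      2 * eval ![a, b] E * eval ![a, b] (pderiv j E) - eval ![a, b] (pderiv j D) * eval ![a, b] F'
        - eval ![a, b] D * eval ![a, b] (pderiv j F') := fun j => by
    simp only [map_sub, map_add, map_mul, Derivation.leibniz_pow, Derivation.leibniz, smul_eq_mul,
      nsmul_eq_mul, Nat.cast_ofNat, eval_ofNat, Nat.reduceSub, pow_one]
    ring
  obtain rfl : G = conicBundleForm D E F' := hG
  rw [eval_conicBundleForm] at hzero
  rw [forall_eval_pderiv_conicBundleForm_eq_zero_iff, conic_singular_iff _ _ _ hzero hw (hcz _ hv)]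
  change _ ↔ vanishingLinearForm ![a, b] ^ 2 ∣ _
  rw [vanishingLinearForm_sq_dvd_iff hR hv]
  simp only [hRj]
  simp only [map_sub, map_mul, map_pow]
end

section
/- Let d ≥ 2 be an integer, and let n, k ∈ ℤ and ν : Fin (3d−4) → ℤ. Then the four equations n² − Σᵢ νᵢ² − k² = −1, 3n − Σᵢ νᵢ − k = 1, d·n − Σᵢ νᵢ − (d−2)·k = d−2, and (d−1)·n − Σᵢ νᵢ − (d−3)·k = d−3 hold simultaneously if and only if k = n − 1, each νᵢ ∈ {0, 1}, and Σᵢ νᵢ = 2n. -/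
/-- The numerical conditions `E² = −1`, `E·K = −1`, `E·H = d−2`, `E·Σ = d−3`
for the class `E = n·e₀ − Σ νᵢ·eᵢ − k·e_{3d−3}` of a special section hold
if and only if `k = n − 1`, every `νᵢ ∈ {0,1}`, and `Σ νᵢ = 2n`. -/
theorem special_section_numerics (d : ℕ) (hd : 2 ≤ d)
    (n k : ℤ) (ν : Fin (3 * d - 4) → ℤ) :
    (n ^ 2 - (∑ i, (ν i) ^ 2) - k ^ 2 = -1 ∧
     3 * n - (∑ i, ν i) - k = 1 ∧
     (d : ℤ) * n - (∑ i, ν i) - ((d : ℤ) - 2) * k = (d : ℤ) - 2 ∧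
     ((d : ℤ) - 1) * n - (∑ i, ν i) - ((d : ℤ) - 3) * k = (d : ℤ) - 3) ↔
    (k = n - 1 ∧ (∀ i, ν i = 0 ∨ ν i = 1) ∧ (∑ i, ν i) = 2 * n) := by
  constructor
  · rintro ⟨h1, h2, h3, h4⟩
    have hk : k = n - 1 := by linarith
    have hS : (∑ i, ν i) = 2 * n := by linarith
    have hSq : (∑ i, (ν i) ^ 2) = 2 * n := by
      rw [hk] at h1; nlinarith
    have hz : ∑ i, ((ν i) ^ 2 - ν i) = 0 := by
      rw [Finset.sum_sub_distrib, hS, hSq]; ring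
    have hall := (Finset.sum_eq_zero_iff_of_nonneg
      (fun i _ => by nlinarith [sq_nonneg (2 * ν i - 1)] :
        ∀ i ∈ Finset.univ, (0:ℤ) ≤ (ν i) ^ 2 - ν i)).mp hz
    refine ⟨hk, fun i => ?_, hS⟩
    have := hall i (Finset.mem_univ i)
    have : ν i * (ν i - 1) = 0 := by nlinarith
    rcases mul_eq_zero.mp this with h | h
    · exact Or.inl h
    · exact Or.inr (by linarith)
  · rintro ⟨hk, hv, hS⟩
    have hSq : (∑ i, (ν i) ^ 2) = ∑ i, ν i := by
      apply Finset.sum_congr rfl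
      intro i _
      rcases hv i with h | h <;> rw [h] <;> ring
    rw [hSq, hS, hk]
    refine ⟨by ring, by ring, by ring, by ring⟩
end

section
/- Let d ≥ 2 be an integer. The set of triples (n, k, ν) with n, k ∈ ℤ and ν : Fin (3d−4) → ℤ satisfying the four equations n² − Σᵢ νᵢ² − k² = −1, 3n − Σᵢ νᵢ − k = 1, d·n − Σᵢ νᵢ − (d−2)·k = d−2, and (d−1)·n − Σᵢ νᵢ − (d−3)·k = d−3 is finite and has exactly 2^{3d−5} elements. -/
private lemma zero_one_of_sq_eq (x : ℤ) (h : x ^ 2 = x) : x = 0 ∨ x = 1 := by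
  have h2 : x * (x - 1) = 0 := by ring_nf; nlinarith [h]
  rcases mul_eq_zero.mp h2 with h | h
  · left; omega
  · right; omega

private lemma sq_sub_self_nonneg (x : ℤ) : 0 ≤ x ^ 2 - x := by
  have h := sq_nonneg (2 * x - 1)
  nlinarith

/-- Characterisation of solutions. -/
private lemma mem_iff (m : ℕ) (c : ℤ) (p : ℤ × ℤ × (Fin m → ℤ)) :
    (p.1 ^ 2 - (∑ i, (p.2.2 i) ^ 2) - p.2.1 ^ 2 = -1 ∧
        3 * p.1 - (∑ i, p.2.2 i) - p.2.1 = 1 ∧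
        c * p.1 - (∑ i, p.2.2 i) - (c - 2) * p.2.1 = c - 2 ∧
        (c - 1) * p.1 - (∑ i, p.2.2 i) - (c - 3) * p.2.1 = c - 3) ↔
    ((∀ i, p.2.2 i = 0 ∨ p.2.2 i = 1) ∧ (∑ i, p.2.2 i) = 2 * p.1 ∧
        p.2.1 = p.1 - 1) := by
  obtain ⟨n, k, ν⟩ := p
  simp only
  constructor
  · rintro ⟨h1, h2, h3, h4⟩
    have hk : k = n - 1 := by
      have h5 : c * n - (∑ i, ν i) - (c - 2) * k -
          ((c - 1) * n - (∑ i, ν i) - (c - 3) * k) = (c - 2) - (c - 3) := by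
        rw [h3, h4]
      ring_nf at h5
      linarith
    have hS : (∑ i, ν i) = 2 * n := by rw [hk] at h2; linarith
    have hsq : (∑ i, (ν i) ^ 2) = 2 * n := by rw [hk] at h1; nlinarith [h1]
    have hzero : (∑ i, ((ν i) ^ 2 - ν i)) = 0 := by
      rw [Finset.sum_sub_distrib, hS, hsq]; ring
    have hall := (Finset.sum_eq_zero_iff_of_nonneg
      (fun i _ => sq_sub_self_nonneg (ν i))).mp hzero
    refine ⟨fun i => ?_, hS, hk⟩
    have := hall i (Finset.mem_univ i)
    exact zero_one_of_sq_eq (ν i) (by linarith)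
  · rintro ⟨h01, hS, hk⟩
    have hsq : (∑ i, (ν i) ^ 2) = (∑ i, ν i) := by
      refine Finset.sum_congr rfl fun i _ => ?_
      rcases h01 i with h | h <;> rw [h] <;> ring
    subst hk
    rw [hsq, hS]
    refine ⟨by ring, by ring, by ring, by ring⟩

private lemma key (m : ℕ) (c : ℤ) :
    {p : ℤ × ℤ × (Fin (m + 1) → ℤ) |
        p.1 ^ 2 - (∑ i, (p.2.2 i) ^ 2) - p.2.1 ^ 2 = -1 ∧
        3 * p.1 - (∑ i, p.2.2 i) - p.2.1 = 1 ∧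
        c * p.1 - (∑ i, p.2.2 i) - (c - 2) * p.2.1 = c - 2 ∧
        (c - 1) * p.1 - (∑ i, p.2.2 i) - (c - 3) * p.2.1 = c - 3}.Finite ∧
    {p : ℤ × ℤ × (Fin (m + 1) → ℤ) |
        p.1 ^ 2 - (∑ i, (p.2.2 i) ^ 2) - p.2.1 ^ 2 = -1 ∧
        3 * p.1 - (∑ i, p.2.2 i) - p.2.1 = 1 ∧
        c * p.1 - (∑ i, p.2.2 i) - (c - 2) * p.2.1 = c - 2 ∧
        (c - 1) * p.1 - (∑ i, p.2.2 i) - (c - 3) * p.2.1 = c - 3}.ncard = 2 ^ m := by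
  set S : Set (ℤ × ℤ × (Fin (m + 1) → ℤ)) :=
    {p | p.1 ^ 2 - (∑ i, (p.2.2 i) ^ 2) - p.2.1 ^ 2 = -1 ∧
        3 * p.1 - (∑ i, p.2.2 i) - p.2.1 = 1 ∧
        c * p.1 - (∑ i, p.2.2 i) - (c - 2) * p.2.1 = c - 2 ∧
        (c - 1) * p.1 - (∑ i, p.2.2 i) - (c - 3) * p.2.1 = c - 3} with hSdef
  have hmem : ∀ p : ℤ × ℤ × (Fin (m + 1) → ℤ), p ∈ S ↔
      ((∀ i, p.2.2 i = 0 ∨ p.2.2 i = 1) ∧ (∑ i, p.2.2 i) = 2 * p.1 ∧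
        p.2.1 = p.1 - 1) := fun p => mem_iff (m + 1) c p
  -- forward map
  classical
  let t : (Fin m → Bool) → ℤ := fun b => ∑ i, (if b i then (1 : ℤ) else 0)
  let r : (Fin m → Bool) → ℤ := fun b => if Even (t b) then 0 else 1
  let nn : (Fin m → Bool) → ℤ := fun b => (t b + r b) / 2
  let νf : (Fin m → Bool) → (Fin (m + 1) → ℤ) := fun b =>
    Fin.snoc (fun i => if b i then (1 : ℤ) else 0) (r b)
  have hsum : ∀ b, (∑ i, νf b i) = t b + r b := by
    intro b
    rw [Fin.sum_univ_castSucc]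
    simp [νf, t]
  have heven : ∀ b, t b + r b = 2 * nn b := by
    intro b
    have he : Even (t b + r b) := by
      by_cases h : Even (t b)
      · simp only [r, if_pos h]; simpa using h
      · simp only [r, if_neg h]
        rcases Int.even_or_odd (t b) with h' | h'
        · exact absurd h' h
        · obtain ⟨c', hc'⟩ := h'; exact ⟨c' + 1, by omega⟩
    obtain ⟨c', hc'⟩ := he
    simp only [nn, hc']
    omega
  let F : (Fin m → Bool) → S := fun b =>
    ⟨(nn b, nn b - 1, νf b), by
      rw [hmem]
      refine ⟨?_, ?_, rfl⟩
      · intro i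
        refine Fin.lastCases ?_ ?_ i
        · simp only [νf, Fin.snoc_last, r]
          by_cases h : Even (t b) <;> simp [h]
        · intro j
          simp only [νf, Fin.snoc_castSucc]
          by_cases h : b j <;> simp [h]
      · rw [hsum, heven]⟩
  let G : S → (Fin m → Bool) := fun p i => decide (p.1.2.2 (Fin.castSucc i) = 1)
  have hGF : Function.LeftInverse G F := by
    intro b
    funext i
    simp only [G, F, νf, Fin.snoc_castSucc]
    by_cases h : b i <;> simp [h]
  have hFG : Function.RightInverse G F := by
    rintro ⟨⟨n, k, ν⟩, hp⟩
    have hp' := (hmem _).mp hp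
    obtain ⟨h01, hS, hk⟩ := hp'
    simp only at h01 hS hk
    set b : Fin m → Bool := fun i => decide (ν (Fin.castSucc i) = 1) with hbdef
    have hGb : G ⟨(n, k, ν), hp⟩ = b := rfl
    have hcast : ∀ i : Fin m, (if b i then (1 : ℤ) else 0) = ν (Fin.castSucc i) := by
      intro i
      rcases h01 (Fin.castSucc i) with h | h <;> simp [b, h]
    have ht : t b = ∑ i : Fin m, ν (Fin.castSucc i) :=
      Finset.sum_congr rfl fun i _ => hcast i
    have htot : (∑ i : Fin m, ν (Fin.castSucc i)) + ν (Fin.last m) = 2 * n := by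
      rw [← Fin.sum_univ_castSucc]; exact hS
    have hr : r b = ν (Fin.last m) := by
      rcases h01 (Fin.last m) with h | h
      · have he : Even (t b) := ⟨n, by rw [ht]; omega⟩
        simp [r, he, h]
      · have he : ¬ Even (t b) := by
          rintro ⟨c', hc'⟩
          rw [ht] at hc'
          omega
        simp [r, he, h]
    have hn : nn b = n := by
      have := heven b
      rw [ht, hr] at this
      omega
    have hν : νf b = ν := by
      funext i
      refine Fin.lastCases ?_ ?_ i
      · rw [show νf b (Fin.last m) = r b from Fin.snoc_last _ _, hr]
      · intro j
        rw [show νf b (Fin.castSucc j) = (if b j then (1:ℤ) else 0) from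
          Fin.snoc_castSucc _ _ _, hcast]
    rw [hGb]
    apply Subtype.ext
    simp only [F]
    rw [hn, hν, hk]
  let e : (Fin m → Bool) ≃ S := ⟨F, G, hGF, hFG⟩
  haveI : Finite ↥S := Finite.of_equiv _ e
  refine ⟨Set.toFinite S, ?_⟩
  rw [← Nat.card_coe_set_eq, Nat.card_congr e.symm, Nat.card_eq_fintype_card]
  simp

/-- The set of numerical classes of special sections of the conic bundle on a
non-degenerate submonoidal surface of degree `d` is finite of cardinality
`2^(3d−5)`. -/
theorem special_section_count (d : ℕ) (hd : 2 ≤ d) :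
    {p : ℤ × ℤ × (Fin (3 * d - 4) → ℤ) |
        p.1 ^ 2 - (∑ i, (p.2.2 i) ^ 2) - p.2.1 ^ 2 = -1 ∧
        3 * p.1 - (∑ i, p.2.2 i) - p.2.1 = 1 ∧
        (d : ℤ) * p.1 - (∑ i, p.2.2 i) - ((d : ℤ) - 2) * p.2.1 = (d : ℤ) - 2 ∧
        ((d : ℤ) - 1) * p.1 - (∑ i, p.2.2 i) - ((d : ℤ) - 3) * p.2.1
          = (d : ℤ) - 3}.Finite ∧
    {p : ℤ × ℤ × (Fin (3 * d - 4) → ℤ) |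
        p.1 ^ 2 - (∑ i, (p.2.2 i) ^ 2) - p.2.1 ^ 2 = -1 ∧
        3 * p.1 - (∑ i, p.2.2 i) - p.2.1 = 1 ∧
        (d : ℤ) * p.1 - (∑ i, p.2.2 i) - ((d : ℤ) - 2) * p.2.1 = (d : ℤ) - 2 ∧
        ((d : ℤ) - 1) * p.1 - (∑ i, p.2.2 i) - ((d : ℤ) - 3) * p.2.1
          = (d : ℤ) - 3}.ncard = 2 ^ (3 * d - 5) := by
  have hm : 3 * d - 4 = (3 * d - 5) + 1 := by omega
  rw [hm]
  exact key (3 * d - 5) (d : ℤ)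
end

section
/- Let m ≥ 2. In the free ℤ-module with basis e₀, …, e_{6m−3} equipped with the symmetric bilinear form ⟨e₀,e₀⟩ = 1, ⟨eᵢ,eᵢ⟩ = −1 for 1 ≤ i ≤ 6m−3, ⟨eᵢ,eⱼ⟩ = 0 for i ≠ j, let τ be the ℤ-linear map determined by τ(e₀) = (3m−1)e₀ − Σ_{i=1}^{6m−4} eᵢ − (3m−2)e_{6m−3}, τ(eᵢ) = e₀ − eᵢ − e_{6m−3} for 1 ≤ i ≤ 6m−4, and τ(e_{6m−3}) = (3m−2)e₀ − Σ_{i=1}^{6m−4} eᵢ − (3m−3)e_{6m−3}. Then τ ∘ τ is the identity, and τ is an isometry of the form: ⟨τ(x), τ(y)⟩ = ⟨x, y⟩ for all x, y. -/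
/-- The Picard-lattice action `τ` of the de Jonquières involution associated to a
submonoidal surface of degree `d = 2m` is an involution and an isometry of the
hyperbolic lattice `ℤ^{6m−2}` with basis `e₀, …, e_{6m−3}`. -/
theorem deJonquieres_involution_isometry (m : ℕ) (hm : 2 ≤ m)
    (τ : (Fin (6 * m - 2) → ℤ) →ₗ[ℤ] (Fin (6 * m - 2) → ℤ))
    (B : (Fin (6 * m - 2) → ℤ) → (Fin (6 * m - 2) → ℤ) → ℤ)
    (hB : ∀ x y, B x y = ∑ i, (if i.val = 0 then 1 else -1) * x i * y i)
    (h0 : τ (Pi.single ⟨0, by omega⟩ 1) = fun j =>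
      if j.val = 0 then 3 * (m : ℤ) - 1
      else if j.val = 6 * m - 3 then -(3 * (m : ℤ) - 2) else -1)
    (hmid : ∀ i : Fin (6 * m - 2), 1 ≤ i.val → i.val ≤ 6 * m - 4 →
      τ (Pi.single i 1) = fun j =>
        (if j.val = 0 then 1 else 0) - (if j = i then 1 else 0)
          - (if j.val = 6 * m - 3 then 1 else 0))
    (hlast : τ (Pi.single ⟨6 * m - 3, by omega⟩ 1) = fun j =>
      if j.val = 0 then 3 * (m : ℤ) - 2
      else if j.val = 6 * m - 3 then -(3 * (m : ℤ) - 3) else -1) :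
    (∀ x, τ (τ x) = x) ∧ (∀ x y, B (τ x) (τ y) = B x y) := by
  have ha' : (0 : ℕ) < 6 * m - 2 := by omega
  have hb' : 6 * m - 3 < 6 * m - 2 := by omega
  set a : Fin (6 * m - 2) := ⟨0, ha'⟩ with ha_def
  set b : Fin (6 * m - 2) := ⟨6 * m - 3, hb'⟩ with hb_def
  have hab : a ≠ b := by simp [a, b, Fin.ext_iff]; omega
  have h0' : τ (Pi.single a 1) = fun j =>
      if j.val = 0 then 3 * (m : ℤ) - 1
      else if j.val = 6 * m - 3 then -(3 * (m : ℤ) - 2) else -1 := h0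
  have hlast' : τ (Pi.single b 1) = fun j =>
      if j.val = 0 then 3 * (m : ℤ) - 2
      else if j.val = 6 * m - 3 then -(3 * (m : ℤ) - 3) else -1 := hlast
  set mid : Finset (Fin (6 * m - 2)) := Finset.univ \ {a, b} with hmid_def
  have hmem : ∀ i : Fin (6 * m - 2), i ∈ mid ↔ (1 ≤ i.val ∧ i.val ≤ 6 * m - 4) := by
    intro i
    have hi := i.isLt
    simp only [mid, Finset.mem_sdiff, Finset.mem_univ, true_and, Finset.mem_insert,
      Finset.mem_singleton, not_or, Fin.ext_iff, a, b]
    omega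
  have hsplit : ∀ f : Fin (6 * m - 2) → ℤ,
      ∑ i, f i = (∑ i ∈ mid, f i) + (f a + f b) := by
    intro f
    rw [← Finset.sum_sdiff (Finset.subset_univ {a, b}), Finset.sum_pair hab]
  have hcard : (mid.card : ℤ) = 6 * (m : ℤ) - 4 := by
    have : mid.card = (Finset.univ : Finset (Fin (6 * m - 2))).card - 2 := by
      rw [hmid_def, Finset.card_sdiff_of_subset (Finset.subset_univ _), Finset.card_pair hab]
    rw [this, Finset.card_univ, Fintype.card_fin]
    omega
  -- closed formula for τ
  have key : ∀ (x : Fin (6 * m - 2) → ℤ) (j : Fin (6 * m - 2)),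
      τ x j =
        if j.val = 0 then
          (3 * (m : ℤ) - 2) * (x a + x b) + (∑ i ∈ mid, x i) + x a
        else if j.val = 6 * m - 3 then
          x b - ((3 * (m : ℤ) - 2) * (x a + x b) + (∑ i ∈ mid, x i))
        else -x j - (x a + x b) := by
    intro x j
    have hsingle : ∀ i : Fin (6 * m - 2),
        (fun k => if i = k then (1:ℤ) else 0) = Pi.single i 1 := by
      intro i; funext k; simp [Pi.single_apply, eq_comm]
    have hx : τ x j = ∑ i, x i * (τ (Pi.single i 1)) j := by
      rw [LinearMap.pi_apply_eq_sum_univ τ x]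
      simp only [hsingle, Finset.sum_apply, Pi.smul_apply, smul_eq_mul]
    rw [hx, hsplit (fun i => x i * (τ (Pi.single i 1)) j), h0', hlast']
    by_cases hj0 : j.val = 0
    · have hjb : ¬ j.val = 6 * m - 3 := by omega
      have hsum : ∑ i ∈ mid, x i * (τ (Pi.single i 1)) j = ∑ i ∈ mid, x i := by
        refine Finset.sum_congr rfl fun i hi => ?_
        obtain ⟨h1, h2⟩ := (hmem i).1 hi
        have hji : ¬ j = i := by
          intro h; rw [h] at hj0; omega
        rw [hmid i h1 h2]
        simp only [if_pos hj0, if_neg hjb, if_neg hji]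
        ring
      rw [hsum]
      simp only [if_pos hj0, if_neg hjb]
      ring
    · by_cases hjb : j.val = 6 * m - 3
      · have hsum : ∑ i ∈ mid, x i * (τ (Pi.single i 1)) j = ∑ i ∈ mid, -x i := by
          refine Finset.sum_congr rfl fun i hi => ?_
          obtain ⟨h1, h2⟩ := (hmem i).1 hi
          have hji : ¬ j = i := by
            intro h; rw [h] at hjb; omega
          rw [hmid i h1 h2]
          simp only [if_pos hjb, if_neg hj0, if_neg hji]
          ring
        rw [hsum, Finset.sum_neg_distrib]
        simp only [if_pos hjb, if_neg hj0]
        ring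
      · have hjmem : j ∈ mid := (hmem j).2 (by have := j.isLt; omega)
        have hsum : ∑ i ∈ mid, x i * (τ (Pi.single i 1)) j
            = ∑ i ∈ mid, (if j = i then -x i else 0) := by
          refine Finset.sum_congr rfl fun i hi => ?_
          obtain ⟨h1, h2⟩ := (hmem i).1 hi
          rw [hmid i h1 h2]
          by_cases hji : j = i
          · simp only [if_neg hj0, if_neg hjb, if_pos hji]
            ring
          · simp only [if_neg hj0, if_neg hjb, if_neg hji]
            ring
        rw [hsum, Finset.sum_ite_eq, if_pos hjmem]
        simp only [if_neg hj0, if_neg hjb]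
        ring
  have haval : a.val = 0 := rfl
  have hbval : b.val = 6 * m - 3 := rfl
  have hbval0 : ¬ b.val = 0 := by simp [hbval]; omega
  have hτa : ∀ x, τ x a = (3 * (m : ℤ) - 2) * (x a + x b) + (∑ i ∈ mid, x i) + x a := by
    intro x; rw [key x a, if_pos haval]
  have hτb : ∀ x, τ x b = x b - ((3 * (m : ℤ) - 2) * (x a + x b) + (∑ i ∈ mid, x i)) := by
    intro x; rw [key x b, if_neg hbval0, if_pos hbval]
  have hτmid : ∀ x, ∀ j ∈ mid, τ x j = -x j - (x a + x b) := by
    intro x j hj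
    obtain ⟨h1, h2⟩ := (hmem j).1 hj
    rw [key x j, if_neg (by omega), if_neg (by omega)]
  have hSτ : ∀ x, (∑ i ∈ mid, τ x i)
      = -(∑ i ∈ mid, x i) - (6 * (m : ℤ) - 4) * (x a + x b) := by
    intro x
    rw [Finset.sum_congr rfl (fun i hi => hτmid x i hi), Finset.sum_sub_distrib,
      Finset.sum_neg_distrib, Finset.sum_const, nsmul_eq_mul, hcard]
  constructor
  · intro x
    funext j
    by_cases hj0 : j.val = 0
    · have hja : j = a := Fin.ext hj0
      rw [hja, hτa (τ x), hτa x, hτb x, hSτ x]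
      ring
    · by_cases hjb : j.val = 6 * m - 3
      · have hjb' : j = b := Fin.ext hjb
        rw [hjb', hτb (τ x), hτa x, hτb x, hSτ x]
        ring
      · have hjm : j ∈ mid := (hmem j).2 (by have := j.isLt; omega)
        rw [hτmid (τ x) j hjm, hτmid x j hjm, hτa x, hτb x]
        ring
  · intro x y
    rw [hB, hB]
    rw [hsplit (fun i => (if i.val = 0 then 1 else -1) * (τ x) i * (τ y) i),
        hsplit (fun i => (if i.val = 0 then 1 else -1) * x i * y i)]
    have hmidterm : ∀ (z w : Fin (6 * m - 2) → ℤ),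
        ∑ i ∈ mid, (if i.val = 0 then (1:ℤ) else -1) * z i * w i
          = ∑ i ∈ mid, -(z i * w i) := by
      intro z w
      refine Finset.sum_congr rfl fun i hi => ?_
      obtain ⟨h1, _⟩ := (hmem i).1 hi
      rw [if_neg (by omega)]
      ring
    rw [hmidterm (τ x) (τ y), hmidterm x y]
    have hmsum : ∑ i ∈ mid, -(τ x i * τ y i)
        = -(∑ i ∈ mid, x i * y i) - (x a + x b) * (∑ i ∈ mid, y i)
          - (y a + y b) * (∑ i ∈ mid, x i)
          - (6 * (m : ℤ) - 4) * ((x a + x b) * (y a + y b)) := by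
      have step : ∀ i ∈ mid, -(τ x i * τ y i)
          = -(x i * y i) - (x a + x b) * y i - (y a + y b) * x i
            - (x a + x b) * (y a + y b) := by
        intro i hi
        rw [hτmid x i hi, hτmid y i hi]
        ring
      rw [Finset.sum_congr rfl step]
      simp only [Finset.sum_sub_distrib, Finset.sum_neg_distrib, ← Finset.mul_sum,
        Finset.sum_const, nsmul_eq_mul, hcard]
      ring
    rw [hmsum, hτa x, hτa y, hτb x, hτb y, Finset.sum_neg_distrib]
    simp only [if_pos haval, if_neg hbval0, if_true]
    ring
end

section
/- Let d ≥ 2 and let B, C, D, E, F' ∈ ℂ[x₀,x₁,x₂,x₃] be polynomials in x₀, x₁ only, homogeneous of degrees d−1, d−1, d−2, d−2, d−2 respectively. Set Δ₁ = D·F' − E², Δ₂ = C·E − B·F', Δ₃ = B·E − C·D, and define the four polynomials T₀ = −x₀·Δ₁, T₁ = −x₁·Δ₁, T₂ = x₂·Δ₁ − 2Δ₂, T₃ = x₃·Δ₁ − 2Δ₃ (each homogeneous of degree 2d−3). Then substituting (T₀, T₁, T₂, T₃) for (x₀, x₁, x₂, x₃) in each Tᵢ yields Tᵢ(T₀,T₁,T₂,T₃)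 = Δ₁^{2d−2} · xᵢ for i = 0, 1, 2, 3. In particular, the rational self-map of P³ defined by [x] ↦ [T₀(x), T₁(x), T₂(x), T₃(x)] is a birational involution. -/
/-!
On the forms in `x₀, x₁` the substitution `x ↦ T(x)` acts as the scaling `x₀, x₁ ↦ −Δ₁ x₀, −Δ₁ x₁`,
so a form of degree `k` in `x₀, x₁` is multiplied by `(−Δ₁)ᵏ`. The minors are bihomogeneous, hence
`Δ₁ ↦ Δ₁^{2d−4} Δ₁` and `Δᵢ ↦ −Δ₁^{2d−3} Δᵢ` for `i = 2, 3`; substituting these into `T` gives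
`T ∘ T = Δ₁^{2d−2} · id`.
-/

open MvPolynomial

namespace MvPolynomial.IsHomogeneous

variable {R σ : Type*} [CommSemiring R] {φ : MvPolynomial σ R} {n : ℕ}

theorem aeval_mul_left_s10 {S : Type*} [CommSemiring S] [Algebra R S] (hφ : φ.IsHomogeneous n)
    (c : S) (f : σ → S) :
    MvPolynomial.aeval (fun i => c * f i) φ = c ^ n * MvPolynomial.aeval f φ := by
  rw [φ.as_sum, map_sum, map_sum, Finset.mul_sum]
  refine Finset.sum_congr rfl fun m hm => ?_
  have hdeg : ∑ i ∈ m.support, m i = n := by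
    simpa [Finsupp.weight_apply, Finsupp.sum] using hφ (mem_support_iff.mp hm)
  simp only [aeval_monomial, Finsupp.prod, mul_pow, Finset.prod_mul_distrib,
    Finset.prod_pow_eq_pow_sum, hdeg]
  ring

theorem aeval_rename_of_apply_eq_mul_X {τ : Type*} (hφ : φ.IsHomogeneous n) {f : σ → τ}
    {T : τ → MvPolynomial τ R} {c : MvPolynomial τ R} (hT : ∀ i, T (f i) = c * X (f i)) :
    MvPolynomial.aeval T (rename f φ) = c ^ n * rename f φ := by
  rw [aeval_rename, show T ∘ f = fun i => c * X (f i) from _root_.funext hT, hφ.aeval_mul_left_s10,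
    rename_eq_aeval]
  rfl

end MvPolynomial.IsHomogeneous

theorem map_mul_sub_mul_of_eq_pow_mul {A F : Type*} [CommRing A] [FunLike F A A]
    [RingHomClass F A A] (φ : F) {u P Q R S : A} {a b : ℕ} (hP : φ P = u ^ a * P)
    (hQ : φ Q = u ^ b * Q) (hR : φ R = u ^ a * R) (hS : φ S = u ^ b * S) :
    φ (P * Q - R * S) = u ^ (a + b) * (P * Q - R * S) := by
  rw [map_sub, map_mul, map_mul, hP, hQ, hR, hS, pow_add]
  ring

section Cremona

variable {R : Type*} [CommRing R] {B C D E F Δ₁ Δ₂ Δ₃ : MvPolynomial (Fin 4) R}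
  {T : Fin 4 → MvPolynomial (Fin 4) R} {m : ℕ}

theorem isHomogeneous_cremona (hB : B.IsHomogeneous (m + 1)) (hC : C.IsHomogeneous (m + 1))
    (hD : D.IsHomogeneous m) (hE : E.IsHomogeneous m) (hF : F.IsHomogeneous m)
    (hΔ₁ : Δ₁ = D * F - E ^ 2) (hΔ₂ : Δ₂ = C * E - B * F) (hΔ₃ : Δ₃ = B * E - C * D)
    (hT : T = ![-(X 0 * Δ₁), -(X 1 * Δ₁), X 2 * Δ₁ - 2 * Δ₂, X 3 * Δ₁ - 2 * Δ₃]) (i : Fin 4) :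
    (T i).IsHomogeneous (m + m + 1) := by
  have h₁ : Δ₁.IsHomogeneous (m + m) := hΔ₁ ▸ sq E ▸ (hD.mul hF).sub (hE.mul hE)
  have h₂ : Δ₂.IsHomogeneous (m + m + 1) :=
    hΔ₂ ▸ Nat.add_right_comm m 1 m ▸ (hC.mul hE).sub (hB.mul hF)
  have h₃ : Δ₃.IsHomogeneous (m + m + 1) :=
    hΔ₃ ▸ Nat.add_right_comm m 1 m ▸ (hB.mul hE).sub (hC.mul hD)
  have hX (j : Fin 4) : (X j * Δ₁).IsHomogeneous (m + m + 1) := by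
    simpa only [add_comm] using (isHomogeneous_X R j).mul h₁
  subst hT
  fin_cases i
  exacts [(hX 0).neg, (hX 1).neg, (hX 2).sub (two_mul Δ₂ ▸ h₂.add h₂),
    (hX 3).sub (two_mul Δ₃ ▸ h₃.add h₃)]

theorem aeval_cremona_apply_of_even
    (hT : T = ![-(X 0 * Δ₁), -(X 1 * Δ₁), X 2 * Δ₁ - 2 * Δ₂, X 3 * Δ₁ - 2 * Δ₃]) {n : ℕ}
    (hn : Even n) (h₁ : aeval T Δ₁ = (-Δ₁) ^ n * Δ₁)
    (h₂ : aeval T Δ₂ = (-Δ₁) ^ (n + 1) * Δ₂) (h₃ : aeval T Δ₃ = (-Δ₁) ^ (n + 1) * Δ₃)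
    (i : Fin 4) : aeval T (T i) = Δ₁ ^ (n + 2) * X i := by
  rw [hn.neg_pow] at h₁
  rw [hn.add_one.neg_pow] at h₂ h₃
  subst hT
  fin_cases i <;>
    simp only [Fin.reduceFinMk, Matrix.cons_val, map_neg, map_sub, map_mul, map_ofNat, aeval_X,
      h₁, h₂, h₃] <;> ring

theorem aeval_cremona_apply (hB : aeval T B = (-Δ₁) ^ (m + 1) * B)
    (hC : aeval T C = (-Δ₁) ^ (m + 1) * C) (hD : aeval T D = (-Δ₁) ^ m * D)
    (hE : aeval T E = (-Δ₁) ^ m * E) (hF : aeval T F = (-Δ₁) ^ m * F)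
    (hΔ₁ : Δ₁ = D * F - E ^ 2) (hΔ₂ : Δ₂ = C * E - B * F) (hΔ₃ : Δ₃ = B * E - C * D)
    (hT : T = ![-(X 0 * Δ₁), -(X 1 * Δ₁), X 2 * Δ₁ - 2 * Δ₂, X 3 * Δ₁ - 2 * Δ₃]) (i : Fin 4) :
    aeval T (T i) = Δ₁ ^ (m + m + 2) * X i := by
  have h₁ : aeval T Δ₁ = (-Δ₁) ^ (m + m) * Δ₁ := by
    simpa only [← sq, ← hΔ₁] using map_mul_sub_mul_of_eq_pow_mul (aeval T) hD hF hE hE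
  have h₂ : aeval T Δ₂ = (-Δ₁) ^ (m + m + 1) * Δ₂ := by
    simpa only [← hΔ₂, Nat.add_right_comm m 1 m] using
      map_mul_sub_mul_of_eq_pow_mul (aeval T) hC hE hB hF
  have h₃ : aeval T Δ₃ = (-Δ₁) ^ (m + m + 1) * Δ₃ := by
    simpa only [← hΔ₃, Nat.add_right_comm m 1 m] using
      map_mul_sub_mul_of_eq_pow_mul (aeval T) hB hE hC hD
  exact aeval_cremona_apply_of_even hT ⟨m, rfl⟩ h₁ h₂ h₃ i

end Cremona

/-- The Cremona transformation `Θ_Γ` of `ℙ³` given by the four degree-`(2d−3)`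
forms `T₀ = −x₀Δ₁`, `T₁ = −x₁Δ₁`, `T₂ = x₂Δ₁ − 2Δ₂`, `T₃ = x₃Δ₁ − 2Δ₃`
satisfies `Tᵢ(T₀,T₁,T₂,T₃) = Δ₁^{2d−2}·xᵢ`, hence is a birational involution. -/
theorem theta_gamma_is_involution (d : ℕ) (hd : 2 ≤ d)
    (B₂ C₂ D₂ E₂ F₂ : MvPolynomial (Fin 2) ℂ)
    (hB₂ : B₂.IsHomogeneous (d - 1)) (hC₂ : C₂.IsHomogeneous (d - 1))
    (hD₂ : D₂.IsHomogeneous (d - 2)) (hE₂ : E₂.IsHomogeneous (d - 2))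
    (hF₂ : F₂.IsHomogeneous (d - 2))
    (B C D E F' Δ₁ Δ₂ Δ₃ : MvPolynomial (Fin 4) ℂ)
    (hB : B = rename (Fin.castLE (by norm_num)) B₂)
    (hC : C = rename (Fin.castLE (by norm_num)) C₂)
    (hD : D = rename (Fin.castLE (by norm_num)) D₂)
    (hE : E = rename (Fin.castLE (by norm_num)) E₂)
    (hF : F' = rename (Fin.castLE (by norm_num)) F₂)
    (hΔ₁ : Δ₁ = D * F' - E ^ 2)
    (hΔ₂ : Δ₂ = C * E - B * F')
    (hΔ₃ : Δ₃ = B * E - C * D)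
    (T : Fin 4 → MvPolynomial (Fin 4) ℂ)
    (hT : T = ![-(X 0 * Δ₁), -(X 1 * Δ₁), X 2 * Δ₁ - 2 * Δ₂, X 3 * Δ₁ - 2 * Δ₃]) :
    (∀ i, (T i).IsHomogeneous (2 * d - 3)) ∧
    (∀ i, aeval T (T i) = Δ₁ ^ (2 * d - 2) * X i) := by
  obtain ⟨m, rfl⟩ := Nat.exists_eq_add_of_le' hd
  have hscale (i : Fin 2) :
      T (Fin.castLE (by norm_num) i) = -Δ₁ * X (Fin.castLE (by norm_num) i) := by
    fin_cases i <;> simp [hT, mul_comm]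
  rw [show 2 * (m + 2) - 3 = m + m + 1 by omega, show 2 * (m + 2) - 2 = m + m + 2 by omega]
  refine ⟨isHomogeneous_cremona (hB ▸ hB₂.rename_isHomogeneous)
      (hC ▸ hC₂.rename_isHomogeneous) (hD ▸ hD₂.rename_isHomogeneous)
      (hE ▸ hE₂.rename_isHomogeneous) (hF ▸ hF₂.rename_isHomogeneous) hΔ₁ hΔ₂ hΔ₃ hT,
    aeval_cremona_apply (hB ▸ hB₂.aeval_rename_of_apply_eq_mul_X hscale)
      (hC ▸ hC₂.aeval_rename_of_apply_eq_mul_X hscale)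
      (hD ▸ hD₂.aeval_rename_of_apply_eq_mul_X hscale)
      (hE ▸ hE₂.aeval_rename_of_apply_eq_mul_X hscale)
      (hF ▸ hF₂.aeval_rename_of_apply_eq_mul_X hscale) hΔ₁ hΔ₂ hΔ₃ hT⟩
end

section
/- Let d ≥ 2 and let A, B, C, D, E, F' ∈ ℂ[x₀,x₁,x₂,x₃] be polynomials in x₀, x₁ only, homogeneous of degrees d, d−1, d−1, d−2, d−2, d−2 respectively. Set F = A + 2B·x₂ + 2C·x₃ + D·x₂² + 2E·x₂x₃ + F'·x₃², let P be the determinant of the symmetric matrix with rows (A,B,C), (B,D,E), (C,E,F'), and set Δ₁ = D·F' − E², Δ₂ = C·E − B·F', Δ₃ = B·E − C·D. Define T'₀ = x₀(F·Δ₁ − P), T'₁ = x₁(F·Δ₁ − P), T'₂ = F·Δ₂ − P·x₂, T'₃ = F·Δ₃ − P·x₃. Then: (1) for every a ∈ ℂ⁴ with F(a) = 0 one has T'ᵢ(a) = −P(a)·aᵢ for i = 0,1,2,3, i.e. the Cremona transformation Θ'_Γ defined by (T'₀,…,T'₃) restricts to the identity on the surface F = 0; and (2) for all i, j ∈ {0,1,2,3},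 the polynomial identity T'ᵢ(T'₀,T'₁,T'₂,T'₃)·xⱼ = T'ⱼ(T'₀,T'₁,T'₂,T'₃)·xᵢ holds, i.e. Θ'_Γ ∘ Θ'_Γ is the identity as a rational self-map of P³. -/
open MvPolynomial

lemma aeval_scale' {S : Type*} [CommSemiring S] [Algebra ℂ S]
    {p : MvPolynomial (Fin 2) ℂ} {n : ℕ} (hp : p.IsHomogeneous n) (r : S) (f : Fin 2 → S) :
    aeval (fun i => r * f i) p = r ^ n * aeval f p := by
  conv_lhs => rw [p.as_sum]
  conv_rhs => rw [p.as_sum]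
  rw [map_sum, map_sum, Finset.mul_sum]
  refine Finset.sum_congr rfl fun m hm => ?_
  rw [aeval_monomial, aeval_monomial, Finsupp.prod, Finsupp.prod]
  have hdeg : ∑ i ∈ m.support, m i = n := by
    have h := hp (mem_support_iff.mp hm)
    simpa [Finsupp.weight_apply, Finsupp.sum] using h
  calc (algebraMap ℂ S) (coeff m p) * ∏ i ∈ m.support, (r * f i) ^ m i
      = (algebraMap ℂ S) (coeff m p) * ((∏ i ∈ m.support, r ^ m i) * ∏ i ∈ m.support, f i ^ m i) := by
        rw [← Finset.prod_mul_distrib]; simp_rw [mul_pow]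
    _ = r ^ n * ((algebraMap ℂ S) (coeff m p) * ∏ i ∈ m.support, f i ^ m i) := by
        rw [Finset.prod_pow_eq_pow_sum, hdeg]; ring

/-- The Cremona transformation `Θ'_Γ = (T'₀,T'₁,T'₂,T'₃)` with
`T'₀ = x₀(FΔ₁ − P)`, `T'₁ = x₁(FΔ₁ − P)`, `T'₂ = FΔ₂ − Px₂`, `T'₃ = FΔ₃ − Px₃`
restricts to the identity on the submonoidal surface `F = 0` (there
`T'ᵢ = −P·xᵢ`), and `Θ'_Γ ∘ Θ'_Γ` is the identity as a rational self-map of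
`ℙ³`. -/
theorem theta_gamma_prime_inertia (d : ℕ) (hd : 2 ≤ d)
    (A₂ B₂ C₂ D₂ E₂ F₂ : MvPolynomial (Fin 2) ℂ)
    (hA₂ : A₂.IsHomogeneous d)
    (hB₂ : B₂.IsHomogeneous (d - 1)) (hC₂ : C₂.IsHomogeneous (d - 1))
    (hD₂ : D₂.IsHomogeneous (d - 2)) (hE₂ : E₂.IsHomogeneous (d - 2))
    (hF₂ : F₂.IsHomogeneous (d - 2))
    (A B C D E F' F P Δ₁ Δ₂ Δ₃ : MvPolynomial (Fin 4) ℂ)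
    (hA : A = rename (Fin.castLE (by norm_num)) A₂)
    (hB : B = rename (Fin.castLE (by norm_num)) B₂)
    (hC : C = rename (Fin.castLE (by norm_num)) C₂)
    (hD : D = rename (Fin.castLE (by norm_num)) D₂)
    (hE : E = rename (Fin.castLE (by norm_num)) E₂)
    (hF : F' = rename (Fin.castLE (by norm_num)) F₂)
    (hFeq : F = A + 2 * B * X 2 + 2 * C * X 3 + D * X 2 ^ 2
        + 2 * E * X 2 * X 3 + F' * X 3 ^ 2)
    (hP : P = Matrix.det !![A, B, C; B, D, E; C, E, F'])
    (hΔ₁ : Δ₁ = D * F' - E ^ 2)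
    (hΔ₂ : Δ₂ = C * E - B * F')
    (hΔ₃ : Δ₃ = B * E - C * D)
    (T' : Fin 4 → MvPolynomial (Fin 4) ℂ)
    (hT' : T' = ![X 0 * (F * Δ₁ - P), X 1 * (F * Δ₁ - P),
        F * Δ₂ - P * X 2, F * Δ₃ - P * X 3]) :
    (∀ a : Fin 4 → ℂ, eval a F = 0 →
      ∀ i, eval a (T' i) = -(eval a P) * a i) ∧
    (∀ i j : Fin 4, aeval T' (T' i) * X j = aeval T' (T' j) * X i) := by
  constructor
  · intro a ha i
    fin_cases i <;> simp [hT', ha] <;> ring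
  -- Part 2
  obtain ⟨k, rfl⟩ : ∃ k, d = k + 2 := ⟨d - 2, by omega⟩
  have hB₂' : B₂.IsHomogeneous (k + 1) := hB₂
  have hC₂' : C₂.IsHomogeneous (k + 1) := hC₂
  have hD₂' : D₂.IsHomogeneous k := hD₂
  have hE₂' : E₂.IsHomogeneous k := hE₂
  have hF₂' : F₂.IsHomogeneous k := hF₂
  set M : MvPolynomial (Fin 4) ℂ := F * Δ₁ - P with hM
  have h0 : T' 0 = X 0 * M := by rw [hT']; rfl
  have h1 : T' 1 = X 1 * M := by rw [hT']; rfl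
  have h2 : T' 2 = F * Δ₂ - P * X 2 := by rw [hT']; rfl
  have h3 : T' 3 = F * Δ₃ - P * X 3 := by rw [hT']; rfl
  have hcomp : ∀ (p : MvPolynomial (Fin 2) ℂ) (n : ℕ), p.IsHomogeneous n →
      aeval T' (rename (Fin.castLE (show (2:ℕ) ≤ 4 by norm_num)) p)
        = M ^ n * rename (Fin.castLE (show (2:ℕ) ≤ 4 by norm_num)) p := by
    intro p n hp
    rw [aeval_rename]
    have hfun : (T' ∘ Fin.castLE (show (2:ℕ) ≤ 4 by norm_num))
        = fun i => M * ((X ∘ Fin.castLE (show (2:ℕ) ≤ 4 by norm_num) :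
            Fin 2 → MvPolynomial (Fin 4) ℂ) i) := by
      funext i
      fin_cases i
      · show T' 0 = M * X 0; rw [h0, mul_comm]
      · show T' 1 = M * X 1; rw [h1, mul_comm]
    rw [hfun, aeval_scale' hp, ← aeval_rename, aeval_X_left_apply]
  have hA' : aeval T' A = M ^ (k + 2) * A := by rw [hA]; exact hcomp A₂ _ hA₂
  have hB' : aeval T' B = M ^ (k + 1) * B := by rw [hB]; exact hcomp B₂ _ hB₂'
  have hC' : aeval T' C = M ^ (k + 1) * C := by rw [hC]; exact hcomp C₂ _ hC₂'
  have hD' : aeval T' D = M ^ k * D := by rw [hD]; exact hcomp D₂ _ hD₂'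
  have hE' : aeval T' E = M ^ k * E := by rw [hE]; exact hcomp E₂ _ hE₂'
  have hF'' : aeval T' F' = M ^ k * F' := by rw [hF]; exact hcomp F₂ _ hF₂'
  have hPdet : P = A * (D * F' - E ^ 2) - B * (B * F' - C * E) + C * (B * E - C * D) := by
    rw [hP, Matrix.det_fin_three]
    simp [Matrix.cons_val_zero, Matrix.cons_val_one]
    ring
  have hΔ₁' : aeval T' Δ₁ = M ^ (2 * k) * Δ₁ := by
    rw [hΔ₁, map_sub, map_mul, map_pow, hD', hE', hF'']
    rw [show 2 * k = k + k by ring, pow_add]; ring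
  have hΔ₂' : aeval T' Δ₂ = M ^ (2 * k + 1) * Δ₂ := by
    rw [hΔ₂, map_sub, map_mul, map_mul, hB', hC', hE', hF'']
    rw [show 2 * k + 1 = (k + 1) + k by ring, pow_add]; ring
  have hΔ₃' : aeval T' Δ₃ = M ^ (2 * k + 1) * Δ₃ := by
    rw [hΔ₃, map_sub, map_mul, map_mul, hB', hC', hD', hE']
    rw [show 2 * k + 1 = (k + 1) + k by ring, pow_add]; ring
  have hPval : aeval T' P = M ^ (3 * k + 2) * P := by
    rw [hPdet]
    simp only [map_add, map_sub, map_mul, map_pow, hA', hB', hC', hD', hE', hF'']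
    rw [show 3 * k + 2 = k + k + k + 2 by ring]
    simp only [pow_add]
    generalize M ^ k = N
    ring
  have hFval : aeval T' F = M ^ (k + 1) * (F * P) := by
    conv_lhs => rw [hFeq]
    simp only [map_add, map_mul, map_pow, aeval_X, hA', hB', hC', hD', hE', hF'', map_ofNat]
    rw [h2, h3]
    simp only [pow_add, pow_one]
    generalize M ^ k = N
    rw [hM, hFeq, hPdet, hΔ₁, hΔ₂, hΔ₃]
    ring
  have hMval : aeval T' M = M ^ (3 * k + 1) * P * (F * Δ₁ - M) := by
    rw [hM, map_sub, map_mul, hFval, hΔ₁', hPval, ← hM]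
    rw [show 3 * k + 2 = (3 * k + 1) + 1 by ring, pow_succ,
        show 3 * k + 1 = (k + 1) + 2 * k by ring, pow_add]
    ring
  have hFΔM : F * Δ₁ - M = P := by rw [hM]; ring
  have key : ∀ i, aeval T' (T' i) = M ^ (3 * k + 2) * P ^ 2 * X i := by
    intro i
    have e32 : M ^ (3 * k + 2) = M ^ (3 * k + 1) * M := by
      rw [show 3 * k + 2 = (3 * k + 1) + 1 by ring, pow_succ]
    fin_cases i
    · show aeval T' (T' 0) = M ^ (3 * k + 2) * P ^ 2 * X 0
      rw [h0, map_mul, aeval_X, hMval, hFΔM, h0, e32]; ring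
    · show aeval T' (T' 1) = M ^ (3 * k + 2) * P ^ 2 * X 1
      rw [h1, map_mul, aeval_X, hMval, hFΔM, h1, e32]; ring
    · show aeval T' (T' 2) = M ^ (3 * k + 2) * P ^ 2 * X 2
      rw [h2, map_sub, map_mul, map_mul, aeval_X, hFval, hΔ₂', hPval, h2]
      rw [show M ^ (k + 1) * (F * P) * (M ^ (2 * k + 1) * Δ₂)
          = M ^ (3 * k + 2) * (F * P * Δ₂) by
        rw [show 3 * k + 2 = (k + 1) + (2 * k + 1) by ring, pow_add]; ring]
      ring
    · show aeval T' (T' 3) = M ^ (3 * k + 2) * P ^ 2 * X 3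
      rw [h3, map_sub, map_mul, map_mul, aeval_X, hFval, hΔ₃', hPval, h3]
      rw [show M ^ (k + 1) * (F * P) * (M ^ (2 * k + 1) * Δ₃)
          = M ^ (3 * k + 2) * (F * P * Δ₃) by
        rw [show 3 * k + 2 = (k + 1) + (2 * k + 1) by ring, pow_add]; ring]
      ring
  intro i j
  rw [key i, key j]
  ring
end
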